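/- arXiv:2201.11375 — 3 statements merged into one kernel-verified Lean document; each statement's English description precedes it below -/
import Mathlib

section
/- Let O be a discrete valuation ring with uniformizer π. For every integer n ≥ 1, the ring A_n = O[[S,T]]/(S^n T − π) is an integral domain. -/
set_option linter.unusedSectionVars false
set_option maxHeartbeats 1000000

/-! Auxiliary development for STATEMENT 8.

We prove that `f = SⁿT - π` is a prime element of `R = O[[S,T]]`.  The key tool is the
"weighted leading form" of a power series: give `S`, `T` weight `1` and `π` weight `n+1`;
the leading form lives in `MvPolynomial (Fin 3) k` (`k` the residue field), where the
variable `X 0` records the `π`-adic part.  The leading form of `f` is `X 1 ^ n * X 2 - X 0`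
which is prime.  A separate explicit "chain sum" divisibility criterion bounds the possible
weighted order of elements in a fixed coset of `(f)`, which makes a finite descent possible
and avoids any completeness assumption on `O`. -/

open Finset

noncomputable section Stmt8Aux

variable {O : Type*} [CommRing O] [IsDomain O] [IsDiscreteValuationRing O]

/-- monomial index `S^i T^j` -/
def mk2 (i j : ℕ) : Fin 2 →₀ ℕ := Finsupp.single 0 i + Finsupp.single 1 j

/-- monomial index `π^e S^i T^j` -/
def tri (e i j : ℕ) : Fin 3 →₀ ℕ :=
  Finsupp.single 0 e + Finsupp.single 1 i + Finsupp.single 2 j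

@[simp] lemma mk2_apply_0 (i j : ℕ) : mk2 i j 0 = i := by
  simp [mk2, Finsupp.single_apply]

@[simp] lemma mk2_apply_1 (i j : ℕ) : mk2 i j 1 = j := by
  simp [mk2, Finsupp.single_apply]

lemma mk2_surj (m : Fin 2 →₀ ℕ) : m = mk2 (m 0) (m 1) := by
  ext a
  fin_cases a <;> simp

lemma mk2_inj {i j i' j' : ℕ} (h : mk2 i j = mk2 i' j') : i = i' ∧ j = j' := by
  constructor
  · have := congrArg (fun m => (m : Fin 2 →₀ ℕ) 0) h; simpa using this
  · have := congrArg (fun m => (m : Fin 2 →₀ ℕ) 1) h; simpa using this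

lemma mk2_add (i j i' j' : ℕ) : mk2 i j + mk2 i' j' = mk2 (i + i') (j + j') := by
  ext a; fin_cases a <;> simp

@[simp] lemma tri_apply_0 (e i j : ℕ) : tri e i j 0 = e := by
  simp [tri, Finsupp.single_apply]

@[simp] lemma tri_apply_1 (e i j : ℕ) : tri e i j 1 = i := by
  simp [tri, Finsupp.single_apply]

@[simp] lemma tri_apply_2 (e i j : ℕ) : tri e i j 2 = j := by
  simp [tri, Finsupp.single_apply]

lemma tri_surj (m : Fin 3 →₀ ℕ) : m = tri (m 0) (m 1) (m 2) := by
  ext a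
  fin_cases a <;> simp

variable (π : O)

open Classical in
/-- divide by `π ^ e` (junk value otherwise) -/
def udiv (x : O) (e : ℕ) : O := if h : π ^ e ∣ x then h.choose else 0

lemma pi_pow_ne_zero (hπ : Irreducible π) (e : ℕ) : π ^ e ≠ 0 :=
  pow_ne_zero e hπ.ne_zero

lemma udiv_spec {x : O} {e : ℕ} (h : π ^ e ∣ x) : π ^ e * udiv π x e = x := by
  rw [udiv, dif_pos h]
  exact h.choose_spec.symm

lemma udiv_unique (hπ : Irreducible π) {x y : O} {e : ℕ} (h : π ^ e * y = x) :
    udiv π x e = y := by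
  have hd : π ^ e ∣ x := ⟨y, h.symm⟩
  have := udiv_spec π hd
  exact mul_left_cancel₀ (pi_pow_ne_zero π hπ e) (by rw [this, h])

@[simp] lemma udiv_zero (hπ : Irreducible π) (e : ℕ) : udiv π 0 e = 0 :=
  udiv_unique π hπ (mul_zero _)

lemma udiv_add (hπ : Irreducible π) {x y : O} {e : ℕ} (hx : π ^ e ∣ x) (hy : π ^ e ∣ y) :
    udiv π (x + y) e = udiv π x e + udiv π y e := by
  apply udiv_unique π hπ
  rw [mul_add, udiv_spec π hx, udiv_spec π hy]

lemma udiv_mul (hπ : Irreducible π) {x y : O} {e₁ e₂ : ℕ} (hx : π ^ e₁ ∣ x) (hy : π ^ e₂ ∣ y) :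
    udiv π (x * y) (e₁ + e₂) = udiv π x e₁ * udiv π y e₂ := by
  apply udiv_unique π hπ
  rw [pow_add]
  calc π ^ e₁ * π ^ e₂ * (udiv π x e₁ * udiv π y e₂)
      = (π ^ e₁ * udiv π x e₁) * (π ^ e₂ * udiv π y e₂) := by ring
    _ = x * y := by rw [udiv_spec π hx, udiv_spec π hy]

lemma udiv_pi_mul (hπ : Irreducible π) (x : O) (e : ℕ) : udiv π (π ^ e * x) e = x :=
  udiv_unique π hπ rfl

lemma udiv_sum (hπ : Irreducible π) {ι : Type*} (s : Finset ι) (F : ι → O) (e : ℕ)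
    (h : ∀ x ∈ s, π ^ e ∣ F x) :
    udiv π (∑ x ∈ s, F x) e = ∑ x ∈ s, udiv π (F x) e := by
  apply udiv_unique π hπ
  rw [Finset.mul_sum]
  exact Finset.sum_congr rfl fun x hx => udiv_spec π (h x hx)

/-- the residue map -/
def rho : O →+* IsLocalRing.ResidueField O := IsLocalRing.residue O

lemma rho_eq_zero_iff (hπ : Irreducible π) (x : O) : rho x = 0 ↔ π ∣ x := by
  have h1 : rho x = 0 ↔ x ∈ IsLocalRing.maximalIdeal O := Ideal.Quotient.eq_zero_iff_mem
  rw [h1, hπ.maximalIdeal_eq, Ideal.mem_span_singleton]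

lemma rho_udiv_eq_zero (hπ : Irreducible π) {x : O} {e : ℕ} (h : π ^ (e + 1) ∣ x) :
    rho (udiv π x e) = 0 := by
  rw [rho_eq_zero_iff π hπ]
  obtain ⟨y, hy⟩ := h
  have : udiv π x e = π * y := udiv_unique π hπ (by rw [hy, pow_succ]; ring)
  exact ⟨y, this⟩

lemma dvd_succ_of_rho_udiv_eq_zero (hπ : Irreducible π) {x : O} {e : ℕ}
    (hdvd : π ^ e ∣ x) (h : rho (udiv π x e) = 0) : π ^ (e + 1) ∣ x := by
  rw [rho_eq_zero_iff π hπ] at h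
  obtain ⟨y, hy⟩ := h
  refine ⟨y, ?_⟩
  rw [← udiv_spec π hdvd, hy, pow_succ]; ring

variable (n : ℕ)

/-- ceiling division helper: `⌈x / (n+1)⌉` -/
def ceilw (x : ℕ) : ℕ := (x + n) / (n + 1)

lemma ceilw_lb (x : ℕ) : x ≤ (n + 1) * ceilw n x := by
  have h := Nat.div_add_mod (x + n) (n + 1)
  have h2 : (x + n) % (n + 1) < n + 1 := Nat.mod_lt _ (Nat.succ_pos n)
  unfold ceilw
  omega

lemma ceilw_ub (x : ℕ) : (n + 1) * ceilw n x ≤ x + n := by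
  have h := Nat.div_add_mod (x + n) (n + 1)
  unfold ceilw
  omega


section Main

variable (hπ : Irreducible π) (hn : 1 ≤ n)

local notation "R" => MvPowerSeries (Fin 2) O

/-- coefficient of a 2-variable power series -/
def co (g : R) (i j : ℕ) : O := MvPowerSeries.coeff (mk2 i j) g

/-- the element `SⁿT - π` -/
def ff : R := MvPowerSeries.monomial (mk2 n 1) 1 - (MvPowerSeries.C π : R)

lemma ff_eq : ff π n =
    (MvPowerSeries.X 0 : R) ^ n * MvPowerSeries.X 1 - (MvPowerSeries.C π : R) := by
  rw [ff, MvPowerSeries.X_pow_eq, MvPowerSeries.X, MvPowerSeries.monomial_mul_monomial,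
    one_mul, mk2]

lemma co_ff (i j : ℕ) :
    co (ff π n) i j = (if i = n ∧ j = 1 then 1 else 0) - (if i = 0 ∧ j = 0 then π else 0) := by
  classical
  rw [co, ff, map_sub, MvPowerSeries.coeff_monomial, MvPowerSeries.coeff_C]
  congr 1
  · by_cases h : i = n ∧ j = 1
    · rw [if_pos, if_pos h]; rw [h.1, h.2]
    · rw [if_neg, if_neg h]
      intro hc
      exact h (mk2_inj hc)
  · by_cases h : i = 0 ∧ j = 0
    · rw [if_pos, if_pos h]
      rw [h.1, h.2]
      ext a; fin_cases a <;> simp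
    · rw [if_neg, if_neg h]
      intro hc
      apply h
      constructor
      · have := congrArg (fun m => (m : Fin 2 →₀ ℕ) 0) hc; simpa using this
      · have := congrArg (fun m => (m : Fin 2 →₀ ℕ) 1) hc; simpa using this

lemma co_add (g h : R) (i j : ℕ) : co (g + h) i j = co g i j + co h i j := by
  simp [co]

lemma co_sub (g h : R) (i j : ℕ) : co (g - h) i j = co g i j - co h i j := by
  simp [co]

lemma mk2_le_iff (a b i j : ℕ) : mk2 a b ≤ mk2 i j ↔ a ≤ i ∧ b ≤ j := by
  rw [Finsupp.le_def]
  constructor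
  · intro h
    exact ⟨by simpa using h 0, by simpa using h 1⟩
  · intro h a'
    fin_cases a'
    · simpa using h.1
    · simpa using h.2

lemma mk2_sub (a b i j : ℕ) : mk2 i j - mk2 a b = mk2 (i - a) (j - b) := by
  ext c; fin_cases c <;> simp [Finsupp.tsub_apply]

/-- coefficients of `ff * x` -/
lemma co_ff_mul (x : R) (i j : ℕ) :
    co (ff π n * x) i j =
      (if n ≤ i ∧ 1 ≤ j then co x (i - n) (j - 1) else 0) - π * co x i j := by
  classical
  rw [co, ff, sub_mul, map_sub, MvPowerSeries.coeff_monomial_mul, MvPowerSeries.coeff_C_mul]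
  simp only [mk2_le_iff, mk2_sub]
  congr 1
  by_cases h : n ≤ i ∧ 1 ≤ j
  · rw [if_pos h, if_pos h, one_mul, co]
  · rw [if_neg h, if_neg h]

/-- `g` has weighted order at least `d`, where `S,T` have weight 1 and `π` weight `n+1`. -/
def vge (g : R) (d : ℕ) : Prop :=
  ∀ i j e : ℕ, (n + 1) * e + i + j < d → π ^ (e + 1) ∣ co g i j

lemma vge_mono {g : R} {d d' : ℕ} (h : d ≤ d') (hg : vge π n g d') : vge π n g d :=
  fun i j e hlt => hg i j e (lt_of_lt_of_le hlt h)

lemma vge_zero (d : ℕ) : vge π n (0 : R) d := by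
  intro i j e _
  simp [co]

lemma vge_of_zero {g : R} (h : g = 0) (d : ℕ) : vge π n g d := h ▸ vge_zero π n d

lemma vge_bot (g : R) : vge π n g 0 := fun i j e h => absurd h (by omega)

lemma vge_add {g h : R} {d : ℕ} (hg : vge π n g d) (hh : vge π n h d) :
    vge π n (g + h) d := by
  intro i j e hlt
  rw [co_add]
  exact dvd_add (hg i j e hlt) (hh i j e hlt)

lemma vge_sub {g h : R} {d : ℕ} (hg : vge π n g d) (hh : vge π n h d) :
    vge π n (g - h) d := by
  intro i j e hlt
  rw [co_sub]
  exact dvd_sub (hg i j e hlt) (hh i j e hlt)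

lemma vge_pow {g : R} {d : ℕ} (hg : vge π n g d) {i j e : ℕ}
    (h : (n + 1) * e + i + j ≤ d) : π ^ e ∣ co g i j := by
  rcases Nat.eq_zero_or_pos e with he | he
  · simp [he]
  · obtain ⟨e', rfl⟩ : ∃ e', e = e' + 1 := ⟨e - 1, by omega⟩
    apply hg
    have : (n+1)*e' + (n+1) = (n+1)*(e'+1) := by ring
    omega

lemma vge_ceil {g : R} {d : ℕ} (hg : vge π n g d) (i j : ℕ) :
    π ^ ceilw n (d - (i + j)) ∣ co g i j := by
  set A := ceilw n (d - (i + j)) with hA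
  rcases Nat.eq_zero_or_pos A with h0 | h0
  · simp [h0]
  · obtain ⟨A', hA'⟩ : ∃ A', A = A' + 1 := ⟨A - 1, by omega⟩
    rw [hA']
    apply hg
    have hub := ceilw_ub n (d - (i + j))
    have h1 : (n+1)*(A'+1) = (n+1)*A' + (n+1) := by ring
    rw [← hA, hA'] at hub
    omega

lemma ceilw_ge {d s : ℕ} : d ≤ (n + 1) * ceilw n (d - s) + s := by
  have := ceilw_lb n (d - s)
  omega

lemma vge_mul {g h : R} {d d' : ℕ} (hg : vge π n g d) (hh : vge π n h d') :
    vge π n (g * h) (d + d') := by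
  classical
  intro i j e hlt
  rw [co, MvPowerSeries.coeff_mul]
  apply Finset.dvd_sum
  rintro ⟨m₁, m₂⟩ hmem
  rw [HasAntidiagonal.mem_antidiagonal] at hmem
  have h0 : m₁ 0 + m₂ 0 = i := by
    have := congrArg (fun m => (m : Fin 2 →₀ ℕ) 0) hmem; simpa using this
  have h1 : m₁ 1 + m₂ 1 = j := by
    have := congrArg (fun m => (m : Fin 2 →₀ ℕ) 1) hmem; simpa using this
  set A := ceilw n (d - (m₁ 0 + m₁ 1)) with hA
  set B := ceilw n (d' - (m₂ 0 + m₂ 1)) with hB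
  have hdvd1 : π ^ A ∣ co g (m₁ 0) (m₁ 1) := vge_ceil π n hg _ _
  have hdvd2 : π ^ B ∣ co h (m₂ 0) (m₂ 1) := vge_ceil π n hh _ _
  have hAB : e + 1 ≤ A + B := by
    have c1 : d ≤ (n+1) * A + (m₁ 0 + m₁ 1) := ceilw_ge n
    have c2 : d' ≤ (n+1) * B + (m₂ 0 + m₂ 1) := ceilw_ge n
    have c3 : (n+1)*A + (n+1)*B = (n+1)*(A+B) := by ring
    have c4 : (n+1)*e < (n+1)*(A+B) := by omega
    exact Nat.lt_of_mul_lt_mul_left c4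
  refine dvd_trans (pow_dvd_pow π hAB) ?_
  rw [pow_add]
  have e1 : MvPowerSeries.coeff m₁ g = co g (m₁ 0) (m₁ 1) := by rw [co, ← mk2_surj]
  have e2 : MvPowerSeries.coeff m₂ h = co h (m₂ 0) (m₂ 1) := by rw [co, ← mk2_surj]
  rw [e1, e2]
  exact mul_dvd_mul hdvd1 hdvd2

lemma vge_ff : vge π n (ff π n) (n + 1) := by
  intro i j e hlt
  rw [co_ff]
  by_cases h1 : i = n ∧ j = 1
  · exfalso; omega
  · rw [if_neg h1, zero_sub, dvd_neg]
    by_cases h0 : i = 0 ∧ j = 0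
    · rw [if_pos h0]
      cases e with
      | zero => simpa using dvd_refl π
      | succ e' =>
        exfalso
        have hx : (n+1)*(e'+1) = (n+1)*e' + (n+1) := by ring
        omega
    · rw [if_neg h0]
      exact dvd_zero _


local notation "P3" => MvPolynomial (Fin 3) (IsLocalRing.ResidueField O)

/-- weighted degree of a 3-variable monomial -/
def wdeg (μ : Fin 3 →₀ ℕ) : ℕ := (n + 1) * μ 0 + μ 1 + μ 2

/-- weight function -/
def ww : Fin 3 → ℕ := fun s => if s = 0 then n + 1 else 1

lemma weight_ww (μ : Fin 3 →₀ ℕ) : Finsupp.weight (ww n) μ = wdeg n μ := by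
  classical
  rw [Finsupp.weight_apply]
  rw [show (Finsupp.sum μ fun i c => c • ww n i) = ∑ i : Fin 3, μ i • ww n i from
    Finsupp.sum_fintype _ _ (fun i => by simp)]
  rw [Fin.sum_univ_three]
  simp only [smul_eq_mul, ww, wdeg]
  rw [if_pos trivial, if_neg (by decide : ¬(1:Fin 3) = 0), if_neg (by decide : ¬(2:Fin 3) = 0)]
  ring

open Classical in
/-- the finite set of 3-variable monomials of weighted degree `d` -/
def TT (d : ℕ) : Finset (Fin 3 →₀ ℕ) :=
  ((range (d+1) ×ˢ range (d+1) ×ˢ range (d+1)).image fun t => tri t.1 t.2.1 t.2.2).filter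
    (fun μ => wdeg n μ = d)

lemma mem_TT {d : ℕ} {μ : Fin 3 →₀ ℕ} : μ ∈ TT n d ↔ wdeg n μ = d := by
  classical
  constructor
  · intro h
    exact (Finset.mem_filter.1 h).2
  · intro h
    refine Finset.mem_filter.2 ⟨?_, h⟩
    refine Finset.mem_image.2 ⟨(μ 0, μ 1, μ 2), ?_, (tri_surj μ).symm⟩
    have h0 : μ 0 ≤ (n+1) * μ 0 := Nat.le_mul_of_pos_left _ (Nat.succ_pos n)
    have h1 : (n+1) * μ 0 + μ 1 + μ 2 = d := h
    simp only [Finset.mem_product, Finset.mem_range]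
    refine ⟨by omega, by omega, by omega⟩

open Classical in
/-- the weighted leading form of degree `d` -/
def lf (g : R) (d : ℕ) : P3 :=
  ∑ μ ∈ TT n d, MvPolynomial.monomial μ (rho (udiv π (co g (μ 1) (μ 2)) (μ 0)))

lemma coeff_lf (g : R) (d : ℕ) (μ : Fin 3 →₀ ℕ) :
    MvPolynomial.coeff μ (lf π n g d) =
      if wdeg n μ = d then rho (udiv π (co g (μ 1) (μ 2)) (μ 0)) else 0 := by
  classical
  rw [lf, MvPolynomial.coeff_sum]
  simp_rw [MvPolynomial.coeff_monomial]
  by_cases h : wdeg n μ = d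
  · rw [if_pos h, Finset.sum_eq_single μ]
    · rw [if_pos rfl]
    · intro ν _ hne; rw [if_neg hne]
    · intro habs; exact absurd ((mem_TT n).2 h) habs
  · rw [if_neg h, Finset.sum_eq_zero]
    intro ν hν
    rw [if_neg]
    intro hc
    subst hc
    exact h ((mem_TT n).1 hν)

lemma lf_isWeightedHomogeneous (g : R) (d : ℕ) :
    (lf π n g d).IsWeightedHomogeneous (ww n) d := by
  intro μ hμ
  rw [coeff_lf] at hμ
  rw [weight_ww]
  by_contra h
  rw [if_neg h] at hμ
  exact hμ rfl

lemma udiv_pow_zero (hπ : Irreducible π) (x : O) : udiv π x 0 = x :=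
  udiv_unique π hπ (by rw [pow_zero, one_mul])

lemma lf_add (hπ : Irreducible π) {g h : R} {d : ℕ} (hg : vge π n g d) (hh : vge π n h d) :
    lf π n (g + h) d = lf π n g d + lf π n h d := by
  apply MvPolynomial.ext
  intro μ
  rw [MvPolynomial.coeff_add, coeff_lf, coeff_lf, coeff_lf]
  by_cases hc : wdeg n μ = d
  · rw [if_pos hc, if_pos hc, if_pos hc, co_add]
    rw [udiv_add π hπ (vge_pow π n hg (le_of_eq hc)) (vge_pow π n hh (le_of_eq hc)), map_add]
  · rw [if_neg hc, if_neg hc, if_neg hc, add_zero]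

lemma lf_sub (hπ : Irreducible π) {g h : R} {d : ℕ} (hg : vge π n g d) (hh : vge π n h d) :
    lf π n (g - h) d = lf π n g d - lf π n h d := by
  apply MvPolynomial.ext
  intro μ
  rw [MvPolynomial.coeff_sub, coeff_lf, coeff_lf, coeff_lf]
  by_cases hc : wdeg n μ = d
  · rw [if_pos hc, if_pos hc, if_pos hc, co_sub]
    have hdg := vge_pow π n hg (le_of_eq hc) (i := μ 1) (j := μ 2) (e := μ 0)
    have hdh := vge_pow π n hh (le_of_eq hc) (i := μ 1) (j := μ 2) (e := μ 0)
    rw [sub_eq_add_neg, sub_eq_add_neg]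
    rw [udiv_add π hπ hdg ((dvd_neg).2 hdh), map_add]
    congr 1
    have huneg : udiv π (-(co h (μ 1) (μ 2))) (μ 0) = -udiv π (co h (μ 1) (μ 2)) (μ 0) := by
      apply udiv_unique π hπ
      rw [mul_neg, udiv_spec π hdh]
    rw [huneg, map_neg]
  · rw [if_neg hc, if_neg hc, if_neg hc, sub_zero]

lemma lf_eq_zero_iff (hπ : Irreducible π) {g : R} {d : ℕ} (hg : vge π n g d) :
    lf π n g d = 0 ↔ vge π n g (d + 1) := by
  constructor
  · intro h0 i j e hlt
    rcases Nat.lt_or_ge ((n+1)*e + i + j) d with hlt' | hge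
    · exact hg i j e hlt'
    · have heq : (n+1)*e + i + j = d := by omega
      have hc := congrArg (MvPolynomial.coeff (tri e i j)) h0
      rw [coeff_lf, MvPolynomial.coeff_zero] at hc
      rw [if_pos (by simpa [wdeg] using heq)] at hc
      simp only [tri_apply_0, tri_apply_1, tri_apply_2] at hc
      exact dvd_succ_of_rho_udiv_eq_zero π hπ (vge_pow π n hg (le_of_eq heq)) hc
  · intro hv
    apply MvPolynomial.ext
    intro μ
    rw [coeff_lf, MvPolynomial.coeff_zero]
    by_cases hc : wdeg n μ = d
    · rw [if_pos hc]
      exact rho_udiv_eq_zero π hπ (hv (μ 1) (μ 2) (μ 0) (by unfold wdeg at hc; omega))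
    · rw [if_neg hc]

lemma tri_inj {e i j e' i' j' : ℕ} (h : tri e i j = tri e' i' j') :
    e = e' ∧ i = i' ∧ j = j' := by
  refine ⟨?_, ?_, ?_⟩
  · have := congrArg (fun m => (m : Fin 3 →₀ ℕ) 0) h; simpa using this
  · have := congrArg (fun m => (m : Fin 3 →₀ ℕ) 1) h; simpa using this
  · have := congrArg (fun m => (m : Fin 3 →₀ ℕ) 2) h; simpa using this

/-- the leading form of `ff` -/
lemma lf_ff (hπ : Irreducible π) : lf π n (ff π n) (n + 1) =
    (MvPolynomial.X 1) ^ n * MvPolynomial.X 2 - MvPolynomial.X 0 := by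
  classical
  have hx2 : (MvPolynomial.X 2 : P3) = MvPolynomial.monomial (Finsupp.single 2 1) 1 := by
    rw [← pow_one (MvPolynomial.X 2), MvPolynomial.X_pow_eq_monomial]
  have hx0 : (MvPolynomial.X 0 : P3) = MvPolynomial.monomial (Finsupp.single 0 1) 1 := by
    rw [← pow_one (MvPolynomial.X 0), MvPolynomial.X_pow_eq_monomial]
  have e1 : (Finsupp.single 1 n + Finsupp.single 2 1 : Fin 3 →₀ ℕ) = tri 0 n 1 := by
    ext a; fin_cases a <;> simp [tri, Finsupp.single_apply]
  have e2 : (Finsupp.single 0 1 : Fin 3 →₀ ℕ) = tri 1 0 0 := by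
    ext a; fin_cases a <;> simp [tri, Finsupp.single_apply]
  have hrhs : ((MvPolynomial.X 1) ^ n * MvPolynomial.X 2 - MvPolynomial.X 0 : P3) =
      MvPolynomial.monomial (tri 0 n 1) 1 - MvPolynomial.monomial (tri 1 0 0) 1 := by
    rw [MvPolynomial.X_pow_eq_monomial, hx2, hx0, MvPolynomial.monomial_mul, one_mul, e1, e2]
  rw [hrhs]
  apply MvPolynomial.ext
  intro μ
  rw [coeff_lf, MvPolynomial.coeff_sub, MvPolynomial.coeff_monomial,
    MvPolynomial.coeff_monomial]
  by_cases h1 : μ = tri 0 n 1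
  · subst h1
    rw [if_pos (by simp [wdeg])]
    rw [if_pos rfl, if_neg (fun hc => by have := (tri_inj hc).1; omega)]
    simp only [tri_apply_0, tri_apply_1, tri_apply_2]
    rw [co_ff, if_pos ⟨rfl, rfl⟩, if_neg (fun hc => by omega), sub_zero,
      udiv_pow_zero π hπ, map_one, sub_zero]
  · by_cases h2 : μ = tri 1 0 0
    · subst h2
      rw [if_pos (by simp [wdeg])]
      rw [if_neg (fun hc => by have := (tri_inj hc).2.2; omega), if_pos rfl]
      simp only [tri_apply_0, tri_apply_1, tri_apply_2]
      rw [co_ff, if_neg (fun hc => by omega), if_pos ⟨rfl, rfl⟩, zero_sub]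
      have hune : udiv π (-π) 1 = -1 := udiv_unique π hπ (by rw [pow_one]; ring)
      rw [hune, map_neg, map_one, zero_sub]
    · rw [if_neg (fun hc : tri 0 n 1 = μ => h1 hc.symm),
        if_neg (fun hc : tri 1 0 0 = μ => h2 hc.symm), sub_zero]
      by_cases hw : wdeg n μ = n + 1
      · rw [if_pos hw]
        have hco : co (ff π n) (μ 1) (μ 2) = 0 := by
          rw [co_ff]
          rw [if_neg, if_neg, sub_zero]
          · rintro ⟨ha, hb⟩
            apply h2
            have h00 : (n+1) * μ 0 = n + 1 := by unfold wdeg at hw; omega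
            have hμ0 : μ 0 = 1 := by
              have := Nat.eq_of_mul_eq_mul_left (Nat.succ_pos n)
                (h00.trans (mul_one (n+1)).symm)
              exact this
            rw [tri_surj μ, hμ0, ha, hb]
          · rintro ⟨ha, hb⟩
            apply h1
            have h00 : (n+1) * μ 0 = 0 := by unfold wdeg at hw; omega
            have hμ0 : μ 0 = 0 := by
              rcases Nat.mul_eq_zero.1 h00 with h | h
              · omega
              · exact h
            rw [tri_surj μ, hμ0, ha, hb]
        rw [hco, udiv_zero π hπ, map_zero]
      · rw [if_neg hw]


lemma lf_mul (hπ : Irreducible π) {g h : R} {d d' : ℕ}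
    (hg : vge π n g d) (hh : vge π n h d') :
    lf π n (g * h) (d + d') = lf π n g d * lf π n h d' := by
  classical
  apply MvPolynomial.ext
  intro μ
  rw [coeff_lf, MvPolynomial.coeff_mul]
  by_cases hw : wdeg n μ = d + d'
  swap
  · rw [if_neg hw]
    symm
    apply Finset.sum_eq_zero
    rintro ⟨α, β⟩ hmem
    rw [HasAntidiagonal.mem_antidiagonal] at hmem
    rw [coeff_lf, coeff_lf]
    by_cases hα : wdeg n α = d
    · by_cases hβ : wdeg n β = d'
      · exfalso
        apply hw
        have h0 : α 0 + β 0 = μ 0 := by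
          have := congrArg (fun m => (m : Fin 3 →₀ ℕ) 0) hmem; simpa using this
        have h1 : α 1 + β 1 = μ 1 := by
          have := congrArg (fun m => (m : Fin 3 →₀ ℕ) 1) hmem; simpa using this
        have h2 : α 2 + β 2 = μ 2 := by
          have := congrArg (fun m => (m : Fin 3 →₀ ℕ) 2) hmem; simpa using this
        have c3 : (n+1)*(α 0) + (n+1)*(β 0) = (n+1)*(μ 0) := by rw [← mul_add, h0]
        unfold wdeg at hα hβ ⊢
        omega
      · rw [if_neg hβ, mul_zero]
    · rw [if_neg hα, zero_mul]
  · rw [if_pos hw]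
    unfold wdeg at hw
    -- the key divisibility facts
    have key : ∀ m₁ m₂ : Fin 2 →₀ ℕ, m₁ 0 + m₂ 0 = μ 1 → m₁ 1 + m₂ 1 = μ 2 →
        (π ^ (μ 0) ∣ co g (m₁ 0) (m₁ 1) * co h (m₂ 0) (m₂ 1)) ∧
        ((¬ ∃ e₁, e₁ ≤ μ 0 ∧ (n+1)*e₁ + m₁ 0 + m₁ 1 = d) →
          π ^ (μ 0 + 1) ∣ co g (m₁ 0) (m₁ 1) * co h (m₂ 0) (m₂ 1)) := by
      intro m₁ m₂ h0 h1
      have c1 : d ≤ (n+1) * ceilw n (d - (m₁ 0 + m₁ 1)) + (m₁ 0 + m₁ 1) := ceilw_ge n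
      have c2 : d' ≤ (n+1) * ceilw n (d' - (m₂ 0 + m₂ 1)) + (m₂ 0 + m₂ 1) := ceilw_ge n
      set A := ceilw n (d - (m₁ 0 + m₁ 1)) with hA
      set B := ceilw n (d' - (m₂ 0 + m₂ 1)) with hB
      have hd1 : π ^ A ∣ co g (m₁ 0) (m₁ 1) := vge_ceil π n hg _ _
      have hd2 : π ^ B ∣ co h (m₂ 0) (m₂ 1) := vge_ceil π n hh _ _
      have c3 : (n+1)*A + (n+1)*B = (n+1)*(A+B) := by ring
      have hprod : π ^ (A + B) ∣ co g (m₁ 0) (m₁ 1) * co h (m₂ 0) (m₂ 1) := by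
        rw [pow_add]; exact mul_dvd_mul hd1 hd2
      have hmu : (n+1) * μ 0 ≤ (n+1) * (A+B) := by omega
      have hle : μ 0 ≤ A + B := Nat.le_of_mul_le_mul_left hmu (Nat.succ_pos n)
      constructor
      · exact (pow_dvd_pow π hle).trans hprod
      · intro hex
        have hlt : μ 0 + 1 ≤ A + B := by
          by_contra hcon
          push_neg at hcon
          have hABμ : A + B = μ 0 := by omega
          apply hex
          refine ⟨A, by omega, ?_⟩
          have c4 : (n+1)*(A+B) = (n+1)*(μ 0) := by rw [hABμ]
          omega
        exact (pow_dvd_pow π hlt).trans hprod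
    -- expand the product coefficient
    have hco : co (g*h) (μ 1) (μ 2) = ∑ p ∈ HasAntidiagonal.antidiagonal (mk2 (μ 1) (μ 2)),
        co g (p.1 0) (p.1 1) * co h (p.2 0) (p.2 1) := by
      rw [co, MvPowerSeries.coeff_mul]
      apply Finset.sum_congr rfl
      rintro ⟨m₁, m₂⟩ _
      rw [co, co, ← mk2_surj, ← mk2_surj]
    have memcomp : ∀ p : (Fin 2 →₀ ℕ) × (Fin 2 →₀ ℕ),
        p ∈ HasAntidiagonal.antidiagonal (mk2 (μ 1) (μ 2)) →
        p.1 0 + p.2 0 = μ 1 ∧ p.1 1 + p.2 1 = μ 2 := by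
      rintro ⟨m₁, m₂⟩ hmem
      rw [HasAntidiagonal.mem_antidiagonal] at hmem
      constructor
      · have := congrArg (fun m => (m : Fin 2 →₀ ℕ) 0) hmem; simpa using this
      · have := congrArg (fun m => (m : Fin 2 →₀ ℕ) 1) hmem; simpa using this
    rw [hco, udiv_sum π hπ _ _ _ (fun p hp => ((key p.1 p.2 (memcomp p hp).1 (memcomp p hp).2).1)),
      map_sum]
    -- reorganize the right-hand sum
    have step1 : ∑ x ∈ HasAntidiagonal.antidiagonal μ,
        MvPolynomial.coeff x.1 (lf π n g d) * MvPolynomial.coeff x.2 (lf π n h d') =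
        ∑ p ∈ HasAntidiagonal.antidiagonal (mk2 (μ 1) (μ 2)), ∑ q ∈ HasAntidiagonal.antidiagonal (μ 0),
          (if (n+1)*q.1 + p.1 0 + p.1 1 = d
            then rho (udiv π (co g (p.1 0) (p.1 1)) q.1) else 0) *
          (if (n+1)*q.2 + p.2 0 + p.2 1 = d'
            then rho (udiv π (co h (p.2 0) (p.2 1)) q.2) else 0) := by
      refine Eq.trans ?_ (Finset.sum_product (s := HasAntidiagonal.antidiagonal (mk2 (μ 1) (μ 2)))
        (t := HasAntidiagonal.antidiagonal (μ 0)) (f := fun y =>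
          (if (n+1)*y.2.1 + y.1.1 0 + y.1.1 1 = d
            then rho (udiv π (co g (y.1.1 0) (y.1.1 1)) y.2.1) else 0) *
          (if (n+1)*y.2.2 + y.1.2 0 + y.1.2 1 = d'
            then rho (udiv π (co h (y.1.2 0) (y.1.2 1)) y.2.2) else 0)))
      apply Finset.sum_nbij'
        (i := fun (x : (Fin 3 →₀ ℕ) × (Fin 3 →₀ ℕ)) =>
          ((mk2 (x.1 1) (x.1 2), mk2 (x.2 1) (x.2 2)), (x.1 0, x.2 0)))
        (j := fun (y : ((Fin 2 →₀ ℕ) × (Fin 2 →₀ ℕ)) × (ℕ × ℕ)) =>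
          (tri y.2.1 (y.1.1 0) (y.1.1 1), tri y.2.2 (y.1.2 0) (y.1.2 1)))
      · rintro ⟨α, β⟩ hmem
        rw [HasAntidiagonal.mem_antidiagonal] at hmem
        rw [Finset.mem_product, HasAntidiagonal.mem_antidiagonal, HasAntidiagonal.mem_antidiagonal]
        constructor
        · rw [mk2_add]
          congr 1
          · have := congrArg (fun m => (m : Fin 3 →₀ ℕ) 1) hmem; simpa using this
          · have := congrArg (fun m => (m : Fin 3 →₀ ℕ) 2) hmem; simpa using this
        · have := congrArg (fun m => (m : Fin 3 →₀ ℕ) 0) hmem; simpa using this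
      · rintro ⟨⟨m₁, m₂⟩, e₁, e₂⟩ hmem
        rw [Finset.mem_product, HasAntidiagonal.mem_antidiagonal, HasAntidiagonal.mem_antidiagonal] at hmem
        obtain ⟨hm, he⟩ := hmem
        rw [HasAntidiagonal.mem_antidiagonal]
        ext a
        fin_cases a
        · simpa using he
        · have := congrArg (fun m => (m : Fin 2 →₀ ℕ) 0) hm
          simpa using this
        · have := congrArg (fun m => (m : Fin 2 →₀ ℕ) 1) hm
          simpa using this
      · rintro ⟨α, β⟩ _
        simp only [mk2_apply_0, mk2_apply_1, Prod.mk.injEq]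
        exact ⟨(tri_surj α).symm, (tri_surj β).symm⟩
      · rintro ⟨⟨m₁, m₂⟩, e₁, e₂⟩ _
        simp only [tri_apply_0, tri_apply_1, tri_apply_2, Prod.mk.injEq]
        refine ⟨⟨(mk2_surj m₁).symm, (mk2_surj m₂).symm⟩, ?_⟩
        try exact ⟨rfl, rfl⟩
        try trivial
      · rintro ⟨α, β⟩ _
        dsimp only
        rw [coeff_lf, coeff_lf]
        unfold wdeg
        simp only [mk2_apply_0, mk2_apply_1]
    rw [step1]
    -- now compare summand by summand
    apply Finset.sum_congr rfl
    rintro ⟨m₁, m₂⟩ hp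
    obtain ⟨h0, h1⟩ := memcomp _ hp
    dsimp only at h0 h1 ⊢
    by_cases hex : ∃ e₁, e₁ ≤ μ 0 ∧ (n+1)*e₁ + m₁ 0 + m₁ 1 = d
    · obtain ⟨e₁, he₁, heq⟩ := hex
      have heq2 : (n+1)*(μ 0 - e₁) + m₂ 0 + m₂ 1 = d' := by
        have c3 : (n+1)*e₁ + (n+1)*(μ 0 - e₁) = (n+1)*(μ 0) := by
          rw [← mul_add]
          congr 1
          omega
        omega
      rw [Finset.sum_eq_single (e₁, μ 0 - e₁)]
      · dsimp only
        rw [if_pos heq, if_pos heq2]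
        have hg1 : π ^ e₁ ∣ co g (m₁ 0) (m₁ 1) := vge_pow π n hg (le_of_eq heq)
        have hh1 : π ^ (μ 0 - e₁) ∣ co h (m₂ 0) (m₂ 1) := vge_pow π n hh (le_of_eq heq2)
        rw [← map_mul, ← udiv_mul π hπ hg1 hh1]
        have hsum : e₁ + (μ 0 - e₁) = μ 0 := by omega
        rw [hsum]
      · rintro ⟨x, y⟩ hmem hne
        rw [HasAntidiagonal.mem_antidiagonal] at hmem
        dsimp only at hmem ⊢
        by_cases hcx : (n+1)*x + m₁ 0 + m₁ 1 = d
        · exfalso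
          apply hne
          have hxe : x = e₁ := by
            have hmm : (n+1)*x = (n+1)*e₁ := by omega
            exact Nat.eq_of_mul_eq_mul_left (Nat.succ_pos n) hmm
          have hy : y = μ 0 - e₁ := by omega
          rw [hxe, hy]
        · rw [if_neg hcx, zero_mul]
      · intro habs
        exfalso
        apply habs
        rw [HasAntidiagonal.mem_antidiagonal]
        omega
    · rw [Finset.sum_eq_zero]
      · exact rho_udiv_eq_zero π hπ ((key m₁ m₂ h0 h1).2 hex)
      · rintro ⟨x, y⟩ hmem
        rw [HasAntidiagonal.mem_antidiagonal] at hmem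
        dsimp only at hmem ⊢
        by_cases hcx : (n+1)*x + m₁ 0 + m₁ 1 = d
        · exfalso
          exact hex ⟨x, by omega, hcx⟩
        · rw [if_neg hcx, zero_mul]


/-- the leading form of `ff` is a prime polynomial -/
lemma prime_p : Prime ((MvPolynomial.X 1)^n * MvPolynomial.X 2 - MvPolynomial.X 0 : P3) := by
  classical
  set e3 := MvPolynomial.finSuccEquiv (IsLocalRing.ResidueField O) 2 with he3
  have h1 : (1 : Fin 3) = Fin.succ 0 := by decide
  have h2 : (2 : Fin 3) = Fin.succ 1 := by decide
  have himg : e3 ((MvPolynomial.X 1)^n * MvPolynomial.X 2 - MvPolynomial.X 0) =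
      -(Polynomial.X - Polynomial.C ((MvPolynomial.X 0)^n * MvPolynomial.X 1)) := by
    rw [map_sub, map_mul, map_pow, h1, h2, MvPolynomial.finSuccEquiv_X_succ,
      MvPolynomial.finSuccEquiv_X_succ, MvPolynomial.finSuccEquiv_X_zero]
    rw [← Polynomial.C_pow, ← Polynomial.C_mul]
    ring
  have hprime' : Prime (e3 ((MvPolynomial.X 1)^n * MvPolynomial.X 2 - MvPolynomial.X 0)) := by
    rw [himg]
    exact (Polynomial.prime_X_sub_C _).neg
  exact (MulEquiv.prime_iff e3.toRingEquiv.toMulEquiv).mp hprime'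

/-- extraction of a homogeneous cofactor -/
lemma hom_cofactor {P G : P3} {a dG : ℕ} (hP : P.IsWeightedHomogeneous (ww n) a)
    (hG : G.IsWeightedHomogeneous (ww n) dG) (hG0 : G ≠ 0) (hdvd : P ∣ G) :
    a ≤ dG ∧ ∃ c : P3, c.IsWeightedHomogeneous (ww n) (dG - a) ∧ G = P * c := by
  classical
  obtain ⟨c₀, rfl⟩ := hdvd
  obtain ⟨μ, hμ⟩ := MvPolynomial.ne_zero_iff.1 hG0
  have hwμ : Finsupp.weight (ww n) μ = dG := hG hμ
  have hex : ∃ x ∈ HasAntidiagonal.antidiagonal μ,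
      MvPolynomial.coeff x.1 P * MvPolynomial.coeff x.2 c₀ ≠ 0 := by
    by_contra hc
    push_neg at hc
    apply hμ
    rw [MvPolynomial.coeff_mul]
    exact Finset.sum_eq_zero hc
  obtain ⟨⟨α, β⟩, hxmem, hxne⟩ := hex
  rw [HasAntidiagonal.mem_antidiagonal] at hxmem
  have hα : Finsupp.weight (ww n) α = a := hP (left_ne_zero_of_mul hxne)
  have hsum : Finsupp.weight (ww n) α + Finsupp.weight (ww n) β = dG := by
    rw [← map_add, hxmem, hwμ]
  have haw : a ≤ dG := by omega
  have hcomp := MvPolynomial.weightedHomogeneousComponent_isWeightedHomogeneous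
    (w := ww n) (dG - a) c₀
  refine ⟨haw, MvPolynomial.weightedHomogeneousComponent (ww n) (dG - a) c₀, hcomp, ?_⟩
  apply MvPolynomial.ext
  intro ν
  by_cases hν : Finsupp.weight (ww n) ν = dG
  · rw [MvPolynomial.coeff_mul, MvPolynomial.coeff_mul]
    apply Finset.sum_congr rfl
    rintro ⟨σ₁, σ₂⟩ hσ
    rw [HasAntidiagonal.mem_antidiagonal] at hσ
    dsimp only
    by_cases hz : MvPolynomial.coeff σ₁ P = 0
    · rw [hz, zero_mul, zero_mul]
    · congr 1
      rw [MvPolynomial.coeff_weightedHomogeneousComponent]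
      by_cases hz2 : MvPolynomial.coeff σ₂ c₀ = 0
      · rw [hz2]
        split_ifs <;> rfl
      · rw [if_pos]
        have hσ1 : Finsupp.weight (ww n) σ₁ = a := hP hz
        have hσsum : Finsupp.weight (ww n) σ₁ + Finsupp.weight (ww n) σ₂ =
            Finsupp.weight (ww n) ν := by rw [← map_add, hσ]
        omega
  · rw [hG.coeff_eq_zero ν hν]
    have hmul : (P * MvPolynomial.weightedHomogeneousComponent (ww n) (dG - a) c₀)
        |>.IsWeightedHomogeneous (ww n) dG := by
      have := hP.mul hcomp
      rwa [show a + (dG - a) = dG from by omega] at this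
    exact (hmul.coeff_eq_zero ν hν).symm

/-- lifting a weighted homogeneous polynomial to a power series -/
lemma hom_lift (hπ : Irreducible π) {c' : P3} {D : ℕ}
    (hc : c'.IsWeightedHomogeneous (ww n) D) :
    ∃ c : R, vge π n c D ∧ lf π n c D = c' := by
  classical
  have hsurj : Function.Surjective (rho (O := O)) := Ideal.Quotient.mk_surjective
  choose lift hlift using hsurj
  have hco : ∀ i j, co (∑ μ ∈ c'.support, MvPowerSeries.monomial (mk2 (μ 1) (μ 2))
      (π ^ (μ 0) * lift (MvPolynomial.coeff μ c'))) i j =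
      ∑ μ ∈ c'.support, (if mk2 i j = mk2 (μ 1) (μ 2)
        then π ^ (μ 0) * lift (MvPolynomial.coeff μ c') else 0) := by
    intro i j
    rw [co, map_sum]
    apply Finset.sum_congr rfl
    intro μ _
    rw [MvPowerSeries.coeff_monomial]
  have hwt : ∀ μ ∈ c'.support, (n+1) * μ 0 + μ 1 + μ 2 = D := by
    intro μ hμ
    have := hc (MvPolynomial.mem_support_iff.1 hμ)
    rw [weight_ww] at this
    exact this
  refine ⟨∑ μ ∈ c'.support, MvPowerSeries.monomial (mk2 (μ 1) (μ 2))
      (π ^ (μ 0) * lift (MvPolynomial.coeff μ c')), ?_, ?_⟩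
  · -- vge part
    intro i j e hlt
    rw [hco]
    apply Finset.dvd_sum
    intro μ hμ
    split_ifs with hc2
    · obtain ⟨hi, hj⟩ := mk2_inj hc2
      have hwμ := hwt μ hμ
      have hlt2 : (n+1) * e < (n+1) * μ 0 := by omega
      have : e + 1 ≤ μ 0 := Nat.lt_of_mul_lt_mul_left hlt2
      exact Dvd.dvd.mul_right (pow_dvd_pow π this) _
    · exact dvd_zero _
  · -- lf part
    apply MvPolynomial.ext
    intro ν
    rw [coeff_lf]
    by_cases hw : wdeg n ν = D
    · rw [if_pos hw, hco]
      unfold wdeg at hw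
      by_cases hsup : ν ∈ c'.support
      · rw [Finset.sum_eq_single_of_mem ν hsup]
        · rw [if_pos rfl, udiv_pi_mul π hπ, hlift]
        · intro μ hμ hne
          rw [if_neg]
          intro hc2
          apply hne
          obtain ⟨hi, hj⟩ := mk2_inj hc2
          have hwμ := hwt μ hμ
          have hν0 : (n+1) * ν 0 = (n+1) * μ 0 := by omega
          have : ν 0 = μ 0 := Nat.eq_of_mul_eq_mul_left (Nat.succ_pos n) hν0
          rw [tri_surj μ, tri_surj ν, this, hi, hj]
      · rw [Finset.sum_eq_zero]
        · rw [udiv_zero π hπ, map_zero]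
          exact (MvPolynomial.notMem_support_iff.1 hsup).symm
        · intro μ hμ
          rw [if_neg]
          intro hc2
          apply hsup
          obtain ⟨hi, hj⟩ := mk2_inj hc2
          have hwμ := hwt μ hμ
          have hν0 : (n+1) * ν 0 = (n+1) * μ 0 := by omega
          have hee : ν 0 = μ 0 := Nat.eq_of_mul_eq_mul_left (Nat.succ_pos n) hν0
          rw [show ν = μ from by rw [tri_surj μ, tri_surj ν, hee, hi, hj]]
          exact hμ
    · rw [if_neg hw]
      symm
      apply hc.coeff_eq_zero
      rw [weight_ww]
      exact hw


lemma vge_bound (hπ : Irreducible π) {g : R} (hg : g ≠ 0) : ∃ D, ¬ vge π n g D := by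
  obtain ⟨m, hm⟩ : ∃ m, MvPowerSeries.coeff m g ≠ 0 := by
    by_contra hc
    push_neg at hc
    exact hg (MvPowerSeries.ext fun m => by rw [hc, map_zero])
  obtain ⟨e, he⟩ : ∃ e, ¬ π ^ (e+1) ∣ MvPowerSeries.coeff m g := by
    obtain ⟨k, u, hu⟩ := IsDiscreteValuationRing.eq_unit_mul_pow_irreducible hm hπ
    refine ⟨k, fun hdvd => ?_⟩
    rw [hu] at hdvd
    obtain ⟨t, ht⟩ := hdvd
    have hut : (u : O) = π * t := by
      apply mul_left_cancel₀ (pi_pow_ne_zero π hπ k)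
      calc π ^ k * (u : O) = (u : O) * π ^ k := by ring
        _ = π ^ (k+1) * t := ht
        _ = π ^ k * (π * t) := by rw [pow_succ]; ring
    exact hπ.not_isUnit (isUnit_of_dvd_unit ⟨t, hut⟩ u.isUnit)
  refine ⟨(n+1)*e + m 0 + m 1 + 1, fun hv => ?_⟩
  have hvv := hv (m 0) (m 1) e (by omega)
  rw [co, ← mk2_surj] at hvv
  exact he hvv

lemma exact_order (hπ : Irreducible π) {g : R} (hg : g ≠ 0) {d₀ : ℕ} (h₀ : vge π n g d₀) :
    ∃ d, d₀ ≤ d ∧ vge π n g d ∧ ¬ vge π n g (d+1) := by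
  classical
  obtain ⟨D, hD⟩ := vge_bound π n hπ hg
  have hPex : ∃ N, ¬ vge π n g N := ⟨D, hD⟩
  have hNspec : ¬ vge π n g (Nat.find hPex) := Nat.find_spec hPex
  have hmin : ∀ d < Nat.find hPex, vge π n g d := fun d hd =>
    not_not.1 (Nat.find_min hPex hd)
  have hN1 : d₀ < Nat.find hPex := by
    by_contra hcon
    push_neg at hcon
    exact hNspec (vge_mono π n hcon h₀)
  refine ⟨Nat.find hPex - 1, by omega, hmin _ (by omega), ?_⟩
  rw [show Nat.find hPex - 1 + 1 = Nat.find hPex from by omega]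
  exact hNspec

/-- chain sums along the reduction `SⁿT ↦ π` -/
def chainSum (g : R) (b c k : ℕ) : O :=
  ∑ t ∈ range (k+1), π ^ t * co g (b + t*n) (c + t)

lemma chainSum_sub (g h : R) (b c k : ℕ) :
    chainSum π n (g - h) b c k = chainSum π n g b c k - chainSum π n h b c k := by
  unfold chainSum
  rw [← Finset.sum_sub_distrib]
  apply Finset.sum_congr rfl
  intro t _
  rw [co_sub]
  ring

lemma chainSum_ff_mul (x : R) {b c : ℕ} (hbc : b < n ∨ c = 0) (k : ℕ) :
    chainSum π n (ff π n * x) b c k = -(π ^ (k+1) * co x (b + k*n) (c + k)) := by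
  unfold chainSum
  have hterm : ∀ t, π ^ t * co (ff π n * x) (b + t*n) (c + t) =
      (if t = 0 then 0 else π ^ t * co x (b + (t-1)*n) (c + (t-1)))
        - π ^ (t+1) * co x (b + t*n) (c + t) := by
    intro t
    rw [co_ff_mul]
    cases t with
    | zero =>
      rw [if_pos rfl]
      have hcond : ¬ (n ≤ b + 0*n ∧ 1 ≤ c + 0) := by
        rcases hbc with hb | hc0
        · rintro ⟨hle, _⟩; omega
        · rintro ⟨_, hle⟩; omega
      rw [if_neg hcond]
      ring
    | succ t' =>
      rw [if_neg (Nat.succ_ne_zero t')]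
      have ht'n : (t'+1)*n = t'*n + n := by ring
      have hcond : n ≤ b + (t'+1)*n ∧ 1 ≤ c + (t'+1) := ⟨by omega, by omega⟩
      rw [if_pos hcond]
      have e1 : b + (t'+1)*n - n = b + t'*n := by omega
      have e2 : c + (t'+1) - 1 = c + t' := by omega
      have e3 : t' + 1 - 1 = t' := rfl
      rw [e1, e2, e3]
      ring
  rw [Finset.sum_congr rfl (fun t _ => hterm t), Finset.sum_sub_distrib]
  rw [Finset.sum_range_succ'
    (fun t => if t = 0 then 0 else π ^ t * co x (b + (t-1)*n) (c + (t-1))) k]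
  rw [Finset.sum_range_succ (fun t => π ^ (t+1) * co x (b + t*n) (c + t)) k]
  rw [if_pos rfl, add_zero]
  have hsame : ∑ i ∈ range k,
      (if i + 1 = 0 then 0 else π ^ (i+1) * co x (b + (i+1-1)*n) (c + (i+1-1))) =
      ∑ t ∈ range k, π ^ (t+1) * co x (b + t*n) (c + t) := by
    apply Finset.sum_congr rfl
    intro i _
    rw [if_neg (Nat.succ_ne_zero i)]
    norm_num
  rw [hsame]
  ring

/-- a witness that `g` is not divisible by `ff`, stable under adding multiples of `ff` -/
def Wit (g : R) (b c k : ℕ) : Prop :=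
  (b < n ∨ c = 0) ∧ ¬ π ^ (k+1) ∣ chainSum π n g b c k

lemma wit_sub_ff (x : R) {g : R} {b c k : ℕ} (hw : Wit π n g b c k) :
    Wit π n (g - ff π n * x) b c k := by
  obtain ⟨hbc, hnd⟩ := hw
  refine ⟨hbc, fun hdvd => hnd ?_⟩
  have hdvd2 : π ^ (k+1) ∣ chainSum π n (ff π n * x) b c k := by
    rw [chainSum_ff_mul π n x hbc k]
    exact (Dvd.intro _ rfl).neg_right
  have hsplit : chainSum π n g b c k =
      chainSum π n (g - ff π n * x) b c k + chainSum π n (ff π n * x) b c k := by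
    rw [chainSum_sub]
    ring
  rw [hsplit]
  exact dvd_add hdvd hdvd2

lemma wit_not_dvd {g : R} {b c k : ℕ} (hw : Wit π n g b c k) : ¬ ff π n ∣ g := by
  rintro ⟨x, rfl⟩
  apply hw.2
  rw [chainSum_ff_mul π n x hw.1 k]
  exact (Dvd.intro _ rfl).neg_right

lemma wit_ne_zero {g : R} {b c k : ℕ} (hw : Wit π n g b c k) : g ≠ 0 := by
  rintro rfl
  exact wit_not_dvd π n hw (dvd_zero _)

lemma wit_bound {g : R} {b c k d : ℕ} (hw : Wit π n g b c k) (hv : vge π n g d) :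
    d ≤ (n+1)*k + b + c := by
  by_contra hcon
  push_neg at hcon
  apply hw.2
  apply Finset.dvd_sum
  intro t ht
  rw [Finset.mem_range] at ht
  have hco : π ^ (k - t + 1) ∣ co g (b + t*n) (c + t) := by
    apply hv
    have hexp : (n+1)*(k-t) + (n+1)*t = (n+1)*k := by
      rw [← mul_add]
      congr 1
      omega
    have hnt : (n+1)*t = t*n + t := by ring
    omega
  rw [show π ^ (k+1) = π ^ t * π ^ (k - t + 1) from by rw [← pow_add]; congr 1; omega]
  exact mul_dvd_mul (dvd_refl _) hco


lemma dvd_of_crit (hπ : Irreducible π) (hn : 1 ≤ n) {g : R}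
    (hcrit : ∀ b c k, (b < n ∨ c = 0) → π ^ (k+1) ∣ chainSum π n g b c k) :
    ff π n ∣ g := by
  classical
  set Q : R := (fun m => - udiv π
    (chainSum π n g (m 0 - (min (m 0 / n) (m 1))*n) (m 1 - min (m 0 / n) (m 1))
      (min (m 0 / n) (m 1))) (min (m 0 / n) (m 1) + 1) : (Fin 2 →₀ ℕ) → O) with hQdef
  have hcoQ : ∀ i j, co Q i j = - udiv π
      (chainSum π n g (i - (min (i / n) j)*n) (j - min (i / n) j) (min (i / n) j))
      (min (i / n) j + 1) := by
    intro i j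
    rw [co, MvPowerSeries.coeff_apply, hQdef]
    simp only [mk2_apply_0, mk2_apply_1]
  have hnorm : ∀ i j, (i - (min (i / n) j)*n < n ∨ j - min (i / n) j = 0) := by
    intro i j
    rcases le_total (i / n) j with hle | hle
    · left
      rw [min_eq_left hle]
      have h1 := Nat.div_add_mod i n
      have h2 : i % n < n := Nat.mod_lt _ (by omega)
      have h3 : (i/n)*n = n*(i/n) := Nat.mul_comm _ _
      omega
    · right
      rw [min_eq_right hle]
      omega
  refine ⟨Q, ?_⟩
  apply MvPowerSeries.ext
  intro m
  rw [show m = mk2 (m 0) (m 1) from mk2_surj m]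
  generalize m 0 = i
  generalize m 1 = j
  show co g i j = co (ff π n * Q) i j
  rw [co_ff_mul]
  by_cases hc : n ≤ i ∧ 1 ≤ j
  · -- interior case
    rw [if_pos hc]
    have hin : 1 ≤ i / n := (Nat.one_le_div_iff (by omega)).2 hc.1
    have hdiv : (i - n)/n + 1 = i/n := by
      have h := Nat.add_div_right (i - n) (show 0 < n by omega)
      rw [show i - n + n = i from by omega] at h
      omega
    obtain ⟨K', hKK⟩ : ∃ K', min (i/n) j = K' + 1 := by
      refine ⟨min (i/n) j - 1, ?_⟩
      have := le_min hin hc.2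
      omega
    have hK'eq : min ((i-n)/n) (j-1) = K' := by
      rcases le_total (i/n) j with h | h
      · rw [min_eq_left h] at hKK
        rw [min_eq_left (show (i-n)/n ≤ j - 1 from by omega)]
        omega
      · rw [min_eq_right h] at hKK
        rw [min_eq_right (show j - 1 ≤ (i-n)/n from by omega)]
        omega
    have hKni : (K'+1)*n ≤ i := by
      have h1 : K'+1 ≤ i/n := by
        have := min_le_left (i/n) j
        omega
      have h2 : (K'+1)*n ≤ (i/n)*n := Nat.mul_le_mul_right n h1
      have h3 := Nat.div_mul_le_self i n
      omega
    have hKj : K'+1 ≤ j := by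
      have := min_le_right (i/n) j
      omega
    have hb' : (i-n) - K'*n = i - (K'+1)*n := by
      have : (K'+1)*n = K'*n + n := by ring
      omega
    have hc' : (j-1) - K' = j - (K'+1) := by omega
    rw [hcoQ (i-n) (j-1), hcoQ i j, hKK, hK'eq, hb', hc']
    have hnormb : (i - (K'+1)*n < n ∨ j - (K'+1) = 0) := by
      have := hnorm i j
      rw [hKK] at this
      exact this
    have hs' : π^(K'+1) * udiv π
        (chainSum π n g (i-(K'+1)*n) (j-(K'+1)) K') (K'+1) =
        chainSum π n g (i-(K'+1)*n) (j-(K'+1)) K' :=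
      udiv_spec π (hcrit _ _ _ hnormb)
    have hs : π^(K'+1+1) * udiv π
        (chainSum π n g (i-(K'+1)*n) (j-(K'+1)) (K'+1)) (K'+1+1) =
        chainSum π n g (i-(K'+1)*n) (j-(K'+1)) (K'+1) :=
      udiv_spec π (hcrit _ _ _ hnormb)
    have hstep : chainSum π n g (i-(K'+1)*n) (j-(K'+1)) (K'+1) =
        chainSum π n g (i-(K'+1)*n) (j-(K'+1)) K' + π^(K'+1) * co g i j := by
      unfold chainSum
      rw [Finset.sum_range_succ]
      have h1 : (i-(K'+1)*n) + (K'+1)*n = i := by omega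
      have h2 : (j-(K'+1)) + (K'+1) = j := by omega
      rw [h1, h2]
    apply mul_left_cancel₀ (pi_pow_ne_zero π hπ (K'+1+1))
    calc π^(K'+1+1) * (co g i j) =
        π * (chainSum π n g (i-(K'+1)*n) (j-(K'+1)) (K'+1))
          - π * (chainSum π n g (i-(K'+1)*n) (j-(K'+1)) K') := by
          rw [hstep]; ring
      _ = π * (π^(K'+1+1) * udiv π
            (chainSum π n g (i-(K'+1)*n) (j-(K'+1)) (K'+1)) (K'+1+1))
          - π * (π^(K'+1) * udiv π
            (chainSum π n g (i-(K'+1)*n) (j-(K'+1)) K') (K'+1)) := by rw [hs', hs]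
      _ = π^(K'+1+1) * (-udiv π
            (chainSum π n g (i-(K'+1)*n) (j-(K'+1)) K') (K'+1)
          - π * -udiv π
            (chainSum π n g (i-(K'+1)*n) (j-(K'+1)) (K'+1)) (K'+1+1)) := by ring
  · -- boundary case
    rw [if_neg hc]
    have hK0 : min (i/n) j = 0 := by
      rcases Nat.lt_or_ge i n with hlt | hge
      · rw [Nat.div_eq_of_lt hlt]
        simp
      · have hj : j = 0 := by omega
        rw [hj]
        simp
    have hnorm0 : i < n ∨ j = 0 := by
      rcases Nat.lt_or_ge i n with hlt | hge
      · exact Or.inl hlt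
      · exact Or.inr (by omega)
    rw [hcoQ i j, hK0]
    simp only [Nat.zero_mul, Nat.sub_zero, zero_add]
    have hcs0 : chainSum π n g i j 0 = co g i j := by
      unfold chainSum
      rw [Finset.sum_range_one]
      norm_num
    have hs0 : π ^ 1 * udiv π (co g i j) 1 = co g i j := by
      have hss := udiv_spec π (hcrit i j 0 hnorm0)
      rw [hcs0] at hss
      simpa using hss
    rw [hcs0]
    linear_combination - hs0


lemma key_step (hπ : Irreducible π) {g h q : R} {dg dh : ℕ}
    (hfq : g * h = ff π n * q)
    (hg1 : vge π n g dg) (hg2 : ¬ vge π n g (dg+1))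
    (hh1 : vge π n h dh) (hh2 : ¬ vge π n h (dh+1)) :
    (∃ c, vge π n (g - ff π n * c) (dg+1)) ∨ (∃ c, vge π n (h - ff π n * c) (dh+1)) := by
  classical
  have hg0 : g ≠ 0 := fun h0 => hg2 (vge_of_zero π n h0 _)
  have hh0 : h ≠ 0 := fun h0 => hh2 (vge_of_zero π n h0 _)
  have hgh0 : g * h ≠ 0 := mul_ne_zero hg0 hh0
  have hq0 : q ≠ 0 := by
    rintro rfl
    rw [mul_zero] at hfq
    exact hgh0 hfq
  have hG : lf π n g dg ≠ 0 := fun h0 => hg2 ((lf_eq_zero_iff π n hπ hg1).1 h0)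
  have hH : lf π n h dh ≠ 0 := fun h0 => hh2 ((lf_eq_zero_iff π n hπ hh1).1 h0)
  obtain ⟨dq, -, hq1, hq2⟩ := exact_order π n hπ hq0 (vge_bot π n q)
  have hplf : lf π n (ff π n) (n+1) =
      (MvPolynomial.X 1)^n * MvPolynomial.X 2 - MvPolynomial.X 0 := lf_ff π n hπ
  have hpprime : Prime ((MvPolynomial.X 1)^n * MvPolynomial.X 2 - MvPolynomial.X 0 : P3) :=
    prime_p n
  have hpne : ((MvPolynomial.X 1)^n * MvPolynomial.X 2 - MvPolynomial.X 0 : P3) ≠ 0 :=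
    hpprime.ne_zero
  have hQ : lf π n q dq ≠ 0 := fun h0 => hq2 ((lf_eq_zero_iff π n hπ hq1).1 h0)
  have hphom : MvPolynomial.IsWeightedHomogeneous (ww n)
      ((MvPolynomial.X 1)^n * MvPolynomial.X 2 - MvPolynomial.X 0 : P3) (n+1) := by
    rw [← hplf]
    exact lf_isWeightedHomogeneous π n _ _
  have e1 : vge π n (g*h) (dg+dh) := vge_mul π n hg1 hh1
  have e2 : ¬ vge π n (g*h) (dg+dh+1) := by
    intro hcon
    apply mul_ne_zero hG hH
    have hz := (lf_eq_zero_iff π n hπ e1).2 hcon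
    rwa [lf_mul π n hπ hg1 hh1] at hz
  have e3 : vge π n (ff π n * q) ((n+1)+dq) := vge_mul π n (vge_ff π n) hq1
  have e4 : ¬ vge π n (ff π n * q) ((n+1)+dq+1) := by
    intro hcon
    have hz := (lf_eq_zero_iff π n hπ e3).2 hcon
    rw [lf_mul π n hπ (vge_ff π n) hq1, hplf] at hz
    exact (mul_ne_zero hpne hQ) hz
  have hdeq : dg + dh = (n+1) + dq := by
    rw [hfq] at e1 e2
    by_contra hne
    rcases Nat.lt_or_ge (dg+dh) ((n+1)+dq) with hlt | hge
    · exact e2 (vge_mono π n (by omega) e3)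
    · exact e4 (vge_mono π n (by omega) e1)
  have hGH : lf π n g dg * lf π n h dh =
      ((MvPolynomial.X 1)^n * MvPolynomial.X 2 - MvPolynomial.X 0) * lf π n q dq := by
    rw [← lf_mul π n hπ hg1 hh1, ← hplf, ← lf_mul π n hπ (vge_ff π n) hq1, hfq, hdeq]
  have hpdvd : ((MvPolynomial.X 1)^n * MvPolynomial.X 2 - MvPolynomial.X 0 : P3) ∣
      lf π n g dg * lf π n h dh := ⟨lf π n q dq, hGH⟩
  rcases hpprime.2.2 _ _ hpdvd with hcase | hcase
  · left
    obtain ⟨hle, c', hc'hom, hc'eq⟩ :=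
      hom_cofactor n hphom (lf_isWeightedHomogeneous π n g dg) hG hcase
    obtain ⟨c, hcv, hclf⟩ := hom_lift π n hπ hc'hom
    refine ⟨c, ?_⟩
    have hfve : (n+1) + (dg - (n+1)) = dg := by omega
    have hfc1 : vge π n (ff π n * c) dg := by
      have := vge_mul π n (vge_ff π n) hcv
      rwa [hfve] at this
    have hlffc : lf π n (ff π n * c) dg = lf π n g dg := by
      have h2 : lf π n (ff π n * c) ((n+1) + (dg - (n+1))) =
          ((MvPolynomial.X 1)^n * MvPolynomial.X 2 - MvPolynomial.X 0) * c' := by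
        rw [lf_mul π n hπ (vge_ff π n) hcv, hplf, hclf]
      rw [← hfve, h2, ← hc'eq, hfve]
    apply (lf_eq_zero_iff π n hπ (vge_sub π n hg1 hfc1)).1
    rw [lf_sub π n hπ hg1 hfc1, hlffc, sub_self]
  · right
    obtain ⟨hle, c', hc'hom, hc'eq⟩ :=
      hom_cofactor n hphom (lf_isWeightedHomogeneous π n h dh) hH hcase
    obtain ⟨c, hcv, hclf⟩ := hom_lift π n hπ hc'hom
    refine ⟨c, ?_⟩
    have hfve : (n+1) + (dh - (n+1)) = dh := by omega
    have hfc1 : vge π n (ff π n * c) dh := by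
      have := vge_mul π n (vge_ff π n) hcv
      rwa [hfve] at this
    have hlffc : lf π n (ff π n * c) dh = lf π n h dh := by
      have h2 : lf π n (ff π n * c) ((n+1) + (dh - (n+1))) =
          ((MvPolynomial.X 1)^n * MvPolynomial.X 2 - MvPolynomial.X 0) * c' := by
        rw [lf_mul π n hπ (vge_ff π n) hcv, hplf, hclf]
      rw [← hfve, h2, ← hc'eq, hfve]
    apply (lf_eq_zero_iff π n hπ (vge_sub π n hh1 hfc1)).1
    rw [lf_sub π n hπ hh1 hfc1, hlffc, sub_self]

lemma loop (hπ : Irreducible π) :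
    ∀ t (g h q : R) (bg cg kg bh ch kh dg dh : ℕ),
    g * h = ff π n * q →
    Wit π n g bg cg kg → Wit π n h bh ch kh →
    vge π n g dg → ¬ vge π n g (dg+1) →
    vge π n h dh → ¬ vge π n h (dh+1) →
    ((n+1)*kg + bg + cg) + ((n+1)*kh + bh + ch) < t + dg + dh → False := by
  intro t
  induction t with
  | zero =>
    intro g h q bg cg kg bh ch kh dg dh hfq hwg hwh hg1 hg2 hh1 hh2 hbound
    have b1 := wit_bound π n hwg hg1
    have b2 := wit_bound π n hwh hh1
    omega
  | succ t ih =>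
    intro g h q bg cg kg bh ch kh dg dh hfq hwg hwh hg1 hg2 hh1 hh2 hbound
    rcases key_step π n hπ hfq hg1 hg2 hh1 hh2 with ⟨c, hc⟩ | ⟨c, hc⟩
    · have hwg' : Wit π n (g - ff π n * c) bg cg kg := wit_sub_ff π n c hwg
      have hg'0 : (g - ff π n * c) ≠ 0 := wit_ne_zero π n hwg'
      obtain ⟨dg', hdg'le, hg'1, hg'2⟩ := exact_order π n hπ hg'0 hc
      have hfq' : (g - ff π n * c) * h = ff π n * (q - c * h) := by
        calc (g - ff π n * c) * h = g * h - ff π n * (c * h) := by ring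
          _ = ff π n * q - ff π n * (c*h) := by rw [hfq]
          _ = ff π n * (q - c*h) := by ring
      exact ih (g - ff π n * c) h (q - c*h) bg cg kg bh ch kh dg' dh hfq' hwg' hwh
        hg'1 hg'2 hh1 hh2 (by omega)
    · have hwh' : Wit π n (h - ff π n * c) bh ch kh := wit_sub_ff π n c hwh
      have hh'0 : (h - ff π n * c) ≠ 0 := wit_ne_zero π n hwh'
      obtain ⟨dh', hdh'le, hh'1, hh'2⟩ := exact_order π n hπ hh'0 hc
      have hfq' : g * (h - ff π n * c) = ff π n * (q - g * c) := by
        calc g * (h - ff π n * c) = g * h - ff π n * (g * c) := by ring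
          _ = ff π n * q - ff π n * (g*c) := by rw [hfq]
          _ = ff π n * (q - g*c) := by ring
      exact ih g (h - ff π n * c) (q - g*c) bg cg kg bh ch kh dg dh' hfq' hwg hwh'
        hg1 hg2 hh'1 hh'2 (by omega)


lemma ff_ne_zero : ff π n ≠ 0 := by
  intro h0
  have h1 : co (ff π n) n 1 = 1 := by
    rw [co_ff, if_pos ⟨rfl, rfl⟩, if_neg (by rintro ⟨-, hh⟩; exact one_ne_zero hh), sub_zero]
  rw [h0] at h1
  simp only [co, map_zero] at h1
  exact one_ne_zero h1.symm

lemma ff_not_unit (hπ : Irreducible π) : ¬ IsUnit (ff π n) := by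
  intro hu
  have hcu := MvPowerSeries.isUnit_constantCoeff _ hu
  have hcc : MvPowerSeries.constantCoeff (ff π n) = -π := by
    rw [← MvPowerSeries.coeff_zero_eq_constantCoeff_apply]
    have hmk : (0 : Fin 2 →₀ ℕ) = mk2 0 0 := by
      ext a; fin_cases a <;> simp
    rw [hmk]
    have := co_ff π n 0 0
    rw [co] at this
    rw [this, if_neg (by rintro ⟨-, hh⟩; exact one_ne_zero hh.symm), if_pos ⟨rfl, rfl⟩,
      zero_sub]
  rw [hcc] at hcu
  exact hπ.not_isUnit ((IsUnit.neg_iff π).1 hcu)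

lemma prime_ff (hπ : Irreducible π) (hn : 1 ≤ n) : Prime (ff π n) := by
  refine ⟨ff_ne_zero π n, ff_not_unit π n hπ, ?_⟩
  intro a b hdvd
  by_contra hcon
  push_neg at hcon
  obtain ⟨ha, hb⟩ := hcon
  obtain ⟨q, hq⟩ := hdvd
  have hwa : ∃ bg cg kg, Wit π n a bg cg kg := by
    by_contra hcw
    push_neg at hcw
    apply ha
    apply dvd_of_crit π n hπ hn
    intro b' c' k' hn'
    by_contra hd
    exact hcw b' c' k' ⟨hn', hd⟩
  have hwb : ∃ bh ch kh, Wit π n b bh ch kh := by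
    by_contra hcw
    push_neg at hcw
    apply hb
    apply dvd_of_crit π n hπ hn
    intro b' c' k' hn'
    by_contra hd
    exact hcw b' c' k' ⟨hn', hd⟩
  obtain ⟨bg, cg, kg, hwa⟩ := hwa
  obtain ⟨bh, ch, kh, hwb⟩ := hwb
  have ha0 : a ≠ 0 := wit_ne_zero π n hwa
  have hb0 : b ≠ 0 := wit_ne_zero π n hwb
  obtain ⟨da, -, ha1, ha2⟩ := exact_order π n hπ ha0 (vge_bot π n a)
  obtain ⟨db, -, hb1, hb2⟩ := exact_order π n hπ hb0 (vge_bot π n b)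
  exact loop π n hπ (((n+1)*kg + bg + cg) + ((n+1)*kh + bh + ch) + 1)
    a b q bg cg kg bh ch kh da db hq hwa hwb ha1 ha2 hb1 hb2 (by omega)

end Main
end Stmt8Aux

/-- Let `O` be a (complete) discrete valuation ring with uniformizer `π`.
For every `n ≥ 1`, the ring `Aₙ = O[[S,T]]/(SⁿT − π)` is an integral domain.
Here `O[[S,T]]` is the formal power series ring in two variables `S = X 0`, `T = X 1`. -/
theorem stmt8 (O : Type*) [CommRing O] [IsDomain O] [IsDiscreteValuationRing O]
    (π : O) (hπ : Irreducible π) (n : ℕ) (hn : 1 ≤ n) :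
    IsDomain (MvPowerSeries (Fin 2) O ⧸
      Ideal.span {(MvPowerSeries.X 0 : MvPowerSeries (Fin 2) O) ^ n * MvPowerSeries.X 1 -
        MvPowerSeries.C (σ := Fin 2) (R := O) π}) := by
  have hff : ((MvPowerSeries.X 0 : MvPowerSeries (Fin 2) O) ^ n * MvPowerSeries.X 1 -
      MvPowerSeries.C (σ := Fin 2) (R := O) π) = ff π n := (ff_eq π n).symm
  rw [hff, Ideal.Quotient.isDomain_iff_prime, Ideal.span_singleton_prime (ff_ne_zero π n)]
  exact prime_ff π n hπ hn
end

section
/- Let C̃ be a smooth projective curve over a field F with function field K, and let x ≠ y be two F-rational points of C̃. Set Õ = O_{C̃,x} ∩ O_{C̃,y} ⊆ K, N_x = m_x ∩ Õ, N_y = m_y ∩ Õ, and O_c = F + N_x·N_y ⊆ Õ. Then O_c is a local ring with maximal ideal N_x·N_y and residue field F. -/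
private lemma stmt10_unit_iff {K : Type*} [Field K] (A : Subring K) (z : K) (hz : z ∈ A) :
    IsUnit (⟨z, hz⟩ : A) ↔ z ≠ 0 ∧ z⁻¹ ∈ A := by
  constructor
  · intro h
    obtain ⟨w, hw⟩ := h.exists_right_inv
    have hw' : z * (w : K) = 1 := congrArg Subtype.val hw
    have hz0 : z ≠ 0 := by
      rintro rfl; simp at hw'
    have : z⁻¹ = (w : K) := inv_eq_of_mul_eq_one_right hw'
    exact ⟨hz0, this ▸ w.2⟩
  · rintro ⟨h0, hinv⟩
    refine isUnit_iff_exists_inv.2 ⟨⟨z⁻¹, hinv⟩, ?_⟩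
    ext
    exact mul_inv_cancel₀ h0

/-- Let `C̃` be a smooth projective curve over a field `F` with function field
`K`, and `x ≠ y` two `F`-rational points.  The local rings at `x` and `y` are realized as
discrete valuation subrings `A, B` of `K` with fraction field `K`, containing `F`, with
`A ≠ B`; `F`-rationality says every element of `A` (resp. `B`) is congruent to a constant
from `F` modulo the maximal ideal.  Set `Õ = A ∩ B`, `N_x = m_x ∩ Õ`, `N_y = m_y ∩ Õ` (where
for a valuation subring the maximal ideal is `{z | z ∈ A ∧ (z = 0 ∨ z⁻¹ ∉ A)}`), and
`O_c = F + N_x·N_y ⊆ Õ`.  Then `O_c` is a (local) subring with maximal ideal `N_x·N_y` and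
residue field `F`. -/
theorem stmt10 (F K : Type*) [Field F] [Field K] [Algebra F K]
    (A B : Subring K)
    [IsDomain A] [IsDiscreteValuationRing A] [IsDomain B] [IsDiscreteValuationRing B]
    [IsFractionRing A K] [IsFractionRing B K]
    (hFA : ∀ a : F, algebraMap F K a ∈ A) (hFB : ∀ a : F, algebraMap F K a ∈ B)
    (hAB : A ≠ B)
    -- maximal ideals of the valuation rings `A` and `B`, as subsets of `K`
    (mA : Set K) (hmA : mA = {z : K | z ∈ A ∧ (z = 0 ∨ z⁻¹ ∉ A)})
    (mB : Set K) (hmB : mB = {z : K | z ∈ B ∧ (z = 0 ∨ z⁻¹ ∉ B)})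
    -- `F`-rationality of the two points: residue fields are `F`
    (hratA : ∀ z : K, z ∈ A → ∃ a : F, z - algebraMap F K a ∈ mA)
    (hratB : ∀ z : K, z ∈ B → ∃ a : F, z - algebraMap F K a ∈ mB)
    (Nx Ny : Set K) (hNx : Nx = mA ∩ (A ∩ B : Set K)) (hNy : Ny = mB ∩ (A ∩ B : Set K))
    -- the product ideal `N_x · N_y`: finite sums of products `u·v`, `u ∈ N_x`, `v ∈ N_y`
    (NxNy : Set K)
    (hNxNy : NxNy = (AddSubmonoid.closure {z : K | ∃ u ∈ Nx, ∃ v ∈ Ny, z = u * v} : Set K))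
    (Oc : Set K) (hOc : Oc = {z : K | ∃ a : F, z - algebraMap F K a ∈ NxNy}) :
    ∃ S : Subring K, (S : Set K) = Oc ∧ IsLocalRing S ∧
      (∀ h : IsLocalRing S,
        (Subtype.val '' (IsLocalRing.maximalIdeal S : Set S) : Set K) = NxNy) ∧
      (∀ h : IsLocalRing S, Nonempty (IsLocalRing.ResidueField S ≃+* F)) := by
  have hinj : Function.Injective (algebraMap F K) := (algebraMap F K).injective
  -- membership of mA in terms of nonunits of A
  have hmA_mem : ∀ z : K, z ∈ mA ↔ ∃ h : z ∈ A, (⟨z, h⟩ : A) ∈ IsLocalRing.maximalIdeal A := by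
    intro z
    rw [hmA]
    simp only [Set.mem_setOf_eq, IsLocalRing.mem_maximalIdeal, mem_nonunits_iff]
    constructor
    · rintro ⟨hz, h⟩
      refine ⟨hz, fun hu => ?_⟩
      rcases (stmt10_unit_iff A z hz).1 hu with ⟨h0, hinv⟩
      tauto
    · rintro ⟨hz, h⟩
      refine ⟨hz, ?_⟩
      by_contra hc
      push_neg at hc
      exact h ((stmt10_unit_iff A z hz).2 hc)
  have hmB_mem : ∀ z : K, z ∈ mB ↔ ∃ h : z ∈ B, (⟨z, h⟩ : B) ∈ IsLocalRing.maximalIdeal B := by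
    intro z
    rw [hmB]
    simp only [Set.mem_setOf_eq, IsLocalRing.mem_maximalIdeal, mem_nonunits_iff]
    constructor
    · rintro ⟨hz, h⟩
      refine ⟨hz, fun hu => ?_⟩
      rcases (stmt10_unit_iff B z hz).1 hu with ⟨h0, hinv⟩
      tauto
    · rintro ⟨hz, h⟩
      refine ⟨hz, ?_⟩
      by_contra hc
      push_neg at hc
      exact h ((stmt10_unit_iff B z hz).2 hc)
  have hmA_sub : mA ⊆ A := by intro z hz; rw [hmA] at hz; exact hz.1
  have hmB_sub : mB ⊆ B := by intro z hz; rw [hmB] at hz; exact hz.1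
  have hmA_add : ∀ z w : K, z ∈ mA → w ∈ mA → z + w ∈ mA := by
    intro z w hz hw
    obtain ⟨hz1, hz2⟩ := (hmA_mem z).1 hz
    obtain ⟨hw1, hw2⟩ := (hmA_mem w).1 hw
    exact (hmA_mem _).2 ⟨add_mem hz1 hw1, Ideal.add_mem _ hz2 hw2⟩
  have hmB_add : ∀ z w : K, z ∈ mB → w ∈ mB → z + w ∈ mB := by
    intro z w hz hw
    obtain ⟨hz1, hz2⟩ := (hmB_mem z).1 hz
    obtain ⟨hw1, hw2⟩ := (hmB_mem w).1 hw
    exact (hmB_mem _).2 ⟨add_mem hz1 hw1, Ideal.add_mem _ hz2 hw2⟩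
  have hmA_mul : ∀ a z : K, a ∈ A → z ∈ mA → a * z ∈ mA := by
    intro a z ha hz
    obtain ⟨hz1, hz2⟩ := (hmA_mem z).1 hz
    refine (hmA_mem _).2 ⟨mul_mem ha hz1, ?_⟩
    exact Ideal.mul_mem_left _ ⟨a, ha⟩ hz2
  have hmB_mul : ∀ a z : K, a ∈ B → z ∈ mB → a * z ∈ mB := by
    intro a z ha hz
    obtain ⟨hz1, hz2⟩ := (hmB_mem z).1 hz
    refine (hmB_mem _).2 ⟨mul_mem ha hz1, ?_⟩
    exact Ideal.mul_mem_left _ ⟨a, ha⟩ hz2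
  have hmA0 : (0 : K) ∈ mA := by rw [hmA]; exact ⟨zero_mem _, Or.inl rfl⟩
  have hmB0 : (0 : K) ∈ mB := by rw [hmB]; exact ⟨zero_mem _, Or.inl rfl⟩
  -- nonzero constants are not in mA
  have hconstA : ∀ a : F, a ≠ 0 → algebraMap F K a ∉ mA := by
    intro a ha h
    rw [hmA] at h
    rcases h.2 with h0 | hinv
    · exact ha (hinj (by rw [h0, map_zero]))
    · exact hinv (by rw [← map_inv₀]; exact hFA a⁻¹)
  -- properties of NxNy
  have hNsub : ∀ z : K, z ∈ NxNy → z ∈ mA ∧ z ∈ mB ∧ z ∈ A ∧ z ∈ B := by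
    intro z hz
    rw [hNxNy] at hz
    induction hz using AddSubmonoid.closure_induction with
    | mem x hx =>
      obtain ⟨u, hu, v, hv, rfl⟩ := hx
      rw [hNx] at hu; rw [hNy] at hv
      obtain ⟨hu1, hu2, hu3⟩ := hu
      obtain ⟨hv1, hv2, hv3⟩ := hv
      refine ⟨?_, ?_, mul_mem hu2 hv2, mul_mem hu3 hv3⟩
      · rw [mul_comm]; exact hmA_mul _ _ hv2 hu1
      · exact hmB_mul _ _ hu3 hv1
    | zero => exact ⟨hmA0, hmB0, zero_mem _, zero_mem _⟩
    | add x y hx hy ihx ihy =>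
      exact ⟨hmA_add _ _ ihx.1 ihy.1, hmB_add _ _ ihx.2.1 ihy.2.1,
        add_mem ihx.2.2.1 ihy.2.2.1, add_mem ihx.2.2.2 ihy.2.2.2⟩
  have hN0 : (0 : K) ∈ NxNy := by rw [hNxNy]; exact zero_mem _
  have hNadd : ∀ z w : K, z ∈ NxNy → w ∈ NxNy → z + w ∈ NxNy := by
    intro z w hz hw
    rw [hNxNy] at *
    exact add_mem hz hw
  have hNsmul : ∀ w z : K, w ∈ A → w ∈ B → z ∈ NxNy → w * z ∈ NxNy := by
    intro w z hwA hwB hz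
    rw [hNxNy] at hz ⊢
    induction hz using AddSubmonoid.closure_induction with
    | mem x hx =>
      obtain ⟨u, hu, v, hv, rfl⟩ := hx
      refine AddSubmonoid.subset_closure ⟨w * u, ?_, v, hv, by ring⟩
      rw [hNx] at hu ⊢
      exact ⟨hmA_mul _ _ hwA hu.1, mul_mem hwA hu.2.1, mul_mem hwB hu.2.2⟩
    | zero => simpa using zero_mem _
    | add x y hx hy ihx ihy =>
      rw [mul_add]; exact add_mem ihx ihy
  have hNneg : ∀ z : K, z ∈ NxNy → -z ∈ NxNy := by
    intro z hz
    have := hNsmul (-1) z (neg_mem (one_mem A)) (neg_mem (one_mem B)) hz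
    simpa using this
  -- nonzero constants are not in NxNy
  have hNconst : ∀ a : F, algebraMap F K a ∈ NxNy → a = 0 := by
    intro a ha
    by_contra h
    exact hconstA a h (hNsub _ ha).1
  -- membership in Oc
  have hOc_mem : ∀ z : K, z ∈ Oc ↔ ∃ a : F, z - algebraMap F K a ∈ NxNy := by
    intro z; rw [hOc]; rfl
  have hOcA : ∀ z : K, z ∈ Oc → z ∈ A ∧ z ∈ B := by
    intro z hz
    obtain ⟨a, ha⟩ := (hOc_mem z).1 hz
    have h1 := hNsub _ ha
    have : z = algebraMap F K a + (z - algebraMap F K a) := by ring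
    rw [this]
    exact ⟨add_mem (hFA a) h1.2.2.1, add_mem (hFB a) h1.2.2.2⟩
  have hconstB : ∀ a : F, a ≠ 0 → algebraMap F K a ∉ mB := by
    intro a ha h
    rw [hmB] at h
    rcases h.2 with h0 | hinv
    · exact ha (hinj (by rw [h0, map_zero]))
    · exact hinv (by rw [← map_inv₀]; exact hFB a⁻¹)
  have hmA_neg : ∀ z : K, z ∈ mA → -z ∈ mA := by
    intro z hz
    have := hmA_mul (-1) z (neg_mem (one_mem A)) hz
    simpa using this
  have hmB_neg : ∀ z : K, z ∈ mB → -z ∈ mB := by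
    intro z hz
    have := hmB_mul (-1) z (neg_mem (one_mem B)) hz
    simpa using this
  -- the subring
  let S : Subring K :=
    { carrier := Oc
      one_mem' := by
        refine (hOc_mem 1).2 ⟨1, ?_⟩
        rw [map_one, sub_self]; exact hN0
      zero_mem' := by
        refine (hOc_mem 0).2 ⟨0, ?_⟩
        rw [map_zero, sub_zero]; exact hN0
      add_mem' := by
        intro z w hz hw
        obtain ⟨a, ha⟩ := (hOc_mem z).1 hz
        obtain ⟨b, hb⟩ := (hOc_mem w).1 hw
        refine (hOc_mem _).2 ⟨a + b, ?_⟩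
        have : z + w - algebraMap F K (a + b)
            = (z - algebraMap F K a) + (w - algebraMap F K b) := by
          rw [map_add]; ring
        rw [this]; exact hNadd _ _ ha hb
      neg_mem' := by
        intro z hz
        obtain ⟨a, ha⟩ := (hOc_mem z).1 hz
        refine (hOc_mem _).2 ⟨-a, ?_⟩
        have : -z - algebraMap F K (-a) = -(z - algebraMap F K a) := by
          rw [map_neg]; ring
        rw [this]; exact hNneg _ ha
      mul_mem' := by
        intro z w hz hw
        obtain ⟨a, ha⟩ := (hOc_mem z).1 hz
        obtain ⟨b, hb⟩ := (hOc_mem w).1 hw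
        refine (hOc_mem _).2 ⟨a * b, ?_⟩
        have hwAB := hOcA w hw
        have : z * w - algebraMap F K (a * b)
            = algebraMap F K a * (w - algebraMap F K b)
              + w * (z - algebraMap F K a) := by
          rw [map_mul]; ring
        rw [this]
        exact hNadd _ _ (hNsmul _ _ (hFA a) (hFB a) hb)
          (hNsmul _ _ hwAB.1 hwAB.2 ha) }
  have hSOc : ∀ z : K, z ∈ S ↔ z ∈ Oc := fun z => Iff.rfl
  -- elements of Oc with nonzero constant term are units of S
  have hunit : ∀ (z : K) (hz : z ∈ S) (a : F), a ≠ 0 →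
      z - algebraMap F K a ∈ NxNy → IsUnit (⟨z, hz⟩ : S) := by
    intro z hz a ha ht
    have haK : algebraMap F K a ≠ 0 := fun h => ha (hinj (by rw [h, map_zero]))
    have hzAB := hOcA z hz
    have hznA : z ∉ mA := by
      intro hmem
      apply hconstA a ha
      have : algebraMap F K a = z + -(z - algebraMap F K a) := by ring
      rw [this]
      exact hmA_add _ _ hmem (hmA_neg _ (hNsub _ ht).1)
    have hznB : z ∉ mB := by
      intro hmem
      apply hconstB a ha
      have : algebraMap F K a = z + -(z - algebraMap F K a) := by ring
      rw [this]
      exact hmB_add _ _ hmem (hmB_neg _ (hNsub _ ht).2.1)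
    rw [hmA, Set.mem_setOf_eq] at hznA
    rw [hmB, Set.mem_setOf_eq] at hznB
    push_neg at hznA hznB
    obtain ⟨hz0, hzinvA⟩ := hznA hzAB.1
    obtain ⟨-, hzinvB⟩ := hznB hzAB.2
    have hinvmem : z⁻¹ ∈ S := by
      refine (hOc_mem _).2 ⟨a⁻¹, ?_⟩
      have heq : z⁻¹ - algebraMap F K a⁻¹
          = ((algebraMap F K a)⁻¹ * z⁻¹) * -(z - algebraMap F K a) := by
        rw [map_inv₀]
        field_simp
        ring
      rw [heq]
      refine hNsmul _ _ ?_ ?_ (hNneg _ ht)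
      · exact mul_mem (by rw [← map_inv₀]; exact hFA a⁻¹) hzinvA
      · exact mul_mem (by rw [← map_inv₀]; exact hFB a⁻¹) hzinvB
    refine isUnit_iff_exists_inv.2 ⟨⟨z⁻¹, hinvmem⟩, ?_⟩
    ext
    exact mul_inv_cancel₀ hz0
  -- elements of NxNy are nonunits of S
  have hnonunit : ∀ (z : K) (hz : z ∈ S), z ∈ NxNy → ¬ IsUnit (⟨z, hz⟩ : S) := by
    intro z hz hN hu
    obtain ⟨w, hw⟩ := hu.exists_right_inv
    have hw' : z * (w : K) = 1 := congrArg Subtype.val hw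
    have hz0 : z ≠ 0 := by rintro rfl; simp at hw'
    have hmem := (hNsub _ hN).1
    rw [hmA, Set.mem_setOf_eq] at hmem
    rcases hmem.2 with h0 | hinv
    · exact hz0 h0
    · apply hinv
      have : z⁻¹ = (w : K) := inv_eq_of_mul_eq_one_right hw'
      rw [this]
      exact (hOcA _ w.2).1
  have hnt : Nontrivial S :=
    ⟨⟨0, 1, fun h => zero_ne_one (α := K) (congrArg Subtype.val h)⟩⟩
  have hloc : IsLocalRing S := by
    apply IsLocalRing.of_isUnit_or_isUnit_one_sub_self
    rintro ⟨z, hz⟩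
    obtain ⟨a, ha⟩ := (hOc_mem z).1 hz
    by_cases h : a = 0
    · right
      subst h
      rw [map_zero, sub_zero] at ha
      have h1 : (1 : K) - z - algebraMap F K 1 ∈ NxNy := by
        rw [map_one]
        have : (1 : K) - z - 1 = -z := by ring
        rw [this]
        exact hNneg _ ha
      exact hunit (1 - z) (sub_mem (one_mem S) hz) 1 one_ne_zero h1
    · left
      exact hunit z hz a h ha
  -- maximal ideal equals NxNy
  have hmax : ∀ _h : IsLocalRing S,
      (Subtype.val '' (IsLocalRing.maximalIdeal S : Set S) : Set K) = NxNy := by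
    intro h
    ext z
    simp only [Set.mem_image, SetLike.mem_coe]
    constructor
    · rintro ⟨w, hw, rfl⟩
      rw [IsLocalRing.mem_maximalIdeal, mem_nonunits_iff] at hw
      obtain ⟨a, ha⟩ := (hOc_mem (w : K)).1 w.2
      by_cases h0 : a = 0
      · subst h0
        rw [map_zero, sub_zero] at ha
        exact ha
      · exact absurd (hunit (w : K) w.2 a h0 ha) hw
    · intro hzN
      have hzS : z ∈ S := (hOc_mem z).2 ⟨0, by rw [map_zero, sub_zero]; exact hzN⟩
      refine ⟨⟨z, hzS⟩, ?_, rfl⟩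
      rw [IsLocalRing.mem_maximalIdeal, mem_nonunits_iff]
      exact hnonunit z hzS hzN
  refine ⟨S, rfl, hloc, hmax, ?_⟩
  intro h
  -- the ring hom F →+* S
  let φ : F →+* S :=
    { toFun := fun a => ⟨algebraMap F K a,
        (hOc_mem _).2 ⟨a, by rw [sub_self]; exact hN0⟩⟩
      map_one' := by ext; exact map_one _
      map_mul' := fun a b => by ext; exact map_mul _ a b
      map_zero' := by ext; exact map_zero _
      map_add' := fun a b => by ext; exact map_add _ a b }
  let ψ : F →+* IsLocalRing.ResidueField S := (IsLocalRing.residue S).comp φ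
  have hsurj : Function.Surjective ψ := by
    intro r
    obtain ⟨w, rfl⟩ := Ideal.Quotient.mk_surjective r
    obtain ⟨a, ha⟩ := (hOc_mem (w : K)).1 w.2
    refine ⟨a, ?_⟩
    have hmem : w - φ a ∈ IsLocalRing.maximalIdeal S := by
      have hval : ((w - φ a : S) : K) ∈ NxNy := ha
      rw [← hmax h] at hval
      obtain ⟨u, hu, huv⟩ := hval
      rwa [Subtype.ext huv] at hu
    have hmem' : φ a - w ∈ IsLocalRing.maximalIdeal S := by
      have := neg_mem hmem
      simpa using this
    exact Ideal.Quotient.eq.mpr hmem' 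
  have hinjψ : Function.Injective ψ := ψ.injective
  exact ⟨(RingEquiv.ofBijective ψ ⟨hinjψ, hsurj⟩).symm⟩
end

section
/- Let G be a profinite group written as an inverse limit G = lim_i H_i of a cofiltered system of profinite quotients, and let π : G → Q and π_i : H_i → Q be compatible continuous surjections onto a profinite group Q. Then the set of continuous sections Sect(Q, G) of π is naturally identified with the inverse limit lim_i Sect(Q, H_i). -/
/-- Let `G` be a profinite group written as an inverse limit `G = lim_i H_i` of
a cofiltered (directed) system of profinite quotients, with compatible continuous surjections
`π : G → Q` and `π_i : H_i → Q` onto a profinite group `Q`.  Then the set `Sect(Q, G)` of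
continuous sections of `π` is naturally identified (via `s ↦ (p_i ∘ s)_i`) with the inverse
limit `lim_i Sect(Q, H_i)`, i.e. with the set of compatible families of continuous sections
of the `π_i`. -/
theorem stmt12 (I : Type*) [PartialOrder I] [IsDirected I (· ≤ ·)] [Nonempty I]
    (G Q : Type*) [Group G] [TopologicalSpace G] [IsTopologicalGroup G]
    [CompactSpace G] [T2Space G] [TotallyDisconnectedSpace G]
    [Group Q] [TopologicalSpace Q] [IsTopologicalGroup Q]
    [CompactSpace Q] [T2Space Q] [TotallyDisconnectedSpace Q]
    (H : I → Type*) [∀ i, Group (H i)] [∀ i, TopologicalSpace (H i)]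
    [∀ i, IsTopologicalGroup (H i)] [∀ i, CompactSpace (H i)] [∀ i, T2Space (H i)]
    [∀ i, TotallyDisconnectedSpace (H i)]
    -- transition maps of the inverse system
    (t : ∀ i j, i ≤ j → H j →* H i) (ht : ∀ i j h, Continuous (t i j h))
    (htid : ∀ i (x : H i), t i i le_rfl x = x)
    (htcomp : ∀ i j k (hij : i ≤ j) (hjk : j ≤ k) (x : H k),
      t i j hij (t j k hjk x) = t i k (hij.trans hjk) x)
    -- the projections `G → H_i`, surjective, compatible with the transition maps
    (p : ∀ i, G →* H i) (hp : ∀ i, Continuous (p i)) (hpsurj : ∀ i, Function.Surjective (p i))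
    (hpt : ∀ i j (h : i ≤ j) (g : G), t i j h (p j g) = p i g)
    -- the compatible surjections onto `Q`
    (π : G →* Q) (hπ : Continuous π) (hπsurj : Function.Surjective π)
    (πi : ∀ i, H i →* Q) (hπi : ∀ i, Continuous (πi i))
    (hπip : ∀ i (g : G), πi i (p i g) = π g)
    (hπit : ∀ i j (h : i ≤ j) (x : H j), πi i (t i j h x) = πi j x)
    -- `G = lim_i H_i`: the canonical map to the product is injective, its image is exactly
    -- the set of compatible families, and it induces the topology of `G`
    (hinj : Function.Injective (fun g : G => fun i => p i g))
    (hsurjlim : ∀ x : ∀ i, H i, (∀ i j (h : i ≤ j), t i j h (x j) = x i) →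
      ∃ g : G, ∀ i, p i g = x i)
    (hind : Topology.IsInducing (fun g : G => fun i => p i g)) :
    Function.Bijective
      (fun s : {s : Q →* G // Continuous s ∧ ∀ q, π (s q) = q} =>
        (⟨fun i => ⟨(p i).comp s.1, (hp i).comp s.2.1, fun q => by
            simpa [hπip i (s.1 q)] using s.2.2 q⟩,
          fun i j h q => hpt i j h (s.1 q)⟩ :
          {c : ∀ i, {si : Q →* H i // Continuous si ∧ ∀ q, πi i (si q) = q} //
            ∀ i j (h : i ≤ j), ∀ q, t i j h ((c j).1 q) = (c i).1 q})) := by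
  constructor
  · -- injectivity
    rintro ⟨s₁, hc₁, hs₁⟩ ⟨s₂, hc₂, hs₂⟩ h
    ext q
    apply hinj
    funext i
    exact congrArg (fun c => (c.1 i).1 q) h
  · -- surjectivity
    rintro ⟨c, hc⟩
    -- for each q, get g with p i g = (c i).1 q
    have hex : ∀ q : Q, ∃ g : G, ∀ i, p i g = (c i).1 q := fun q =>
      hsurjlim (fun i => (c i).1 q) (fun i j h => hc i j h q)
    choose f hf using hex
    have hmul : ∀ q₁ q₂, f (q₁ * q₂) = f q₁ * f q₂ := by
      intro q₁ q₂
      apply hinj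
      funext i
      simp [hf, map_mul]
    have hcont : Continuous f := by
      rw [hind.continuous_iff]
      have : (fun g : G => fun i => p i g) ∘ f = fun q => fun i => (c i).1 q := by
        funext q
        exact funext fun i => hf q i
      rw [this]
      exact continuous_pi fun i => (c i).2.1
    have hsec : ∀ q, π (f q) = q := by
      intro q
      obtain ⟨i⟩ := ‹Nonempty I›
      rw [← hπip i (f q), hf q i]
      exact (c i).2.2 q
    refine ⟨⟨⟨⟨f, ?_⟩, hmul⟩, hcont, hsec⟩, ?_⟩
    · apply hinj
      funext i
      simp [hf, map_one]
    · apply Subtype.ext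
      funext i
      apply Subtype.ext
      ext q
      exact hf q i
end
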